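/- arXiv:2307.06857 — 2 statements merged into one kernel-verified Lean document; each statement's English description precedes it below -/
import Mathlib

section
/- Suppose u_1, ..., u_n ∈ Fin L^k satisfy the coordinate-wise self-consistency condition with respect to v ∈ Fin L^k (for each coordinate t and every value j, #{i : u_i^t = v^t} ≥ #{i : u_i^t = j}). If there exists an index b with u_b = v, then b maximizes the total pairwise fractional agreement: for every index i, Σ_{j ≠ b} a(u_b, u_j) ≥ Σ_{j ≠ i} a(u_i, u_j), where a(x,y) = (1/k) Σ_{t=1}^k 𝟙[x_t = y_t]. -/
/-!
Summing over the other generation first, the total agreement of `x` with all generations is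
`(1/k) Σ_t #{j : u_j^t = x^t}`. Self-consistency says that the count for `x^t = v^t` is the largest
in every coordinate, so `u_b = v` has the largest total; removing the self-agreement term, which is
the same for every index, preserves the inequality.
-/

/-- Fractional agreement `a(x,y) = (1/k) Σ_t 𝟙[x t = y t]`. -/
noncomputable def fracAgree {k L : ℕ} (x y : Fin k → Fin L) : ℝ :=
  (∑ t : Fin k, if x t = y t then (1 : ℝ) else 0) / k

section

variable {ι : Type*} [Fintype ι] {k L : ℕ}

theorem fracAgree_self (x : Fin k → Fin L) : fracAgree x x = (k : ℝ) / k := by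
  simp [fracAgree]

theorem sum_fracAgree_eq (u : ι → Fin k → Fin L) (x : Fin k → Fin L) :
    ∑ j, fracAgree x (u j) =
      (∑ t, ((Finset.univ.filter fun j => u j t = x t).card : ℝ)) / k := by
  simp only [fracAgree, ← Finset.sum_div]
  rw [Finset.sum_comm]
  congr 1
  refine Finset.sum_congr rfl fun t _ => ?_
  simp [Finset.sum_boole, eq_comm]

theorem sum_fracAgree_le_of_forall_card_le (u : ι → Fin k → Fin L) {x y : Fin k → Fin L}
    (h : ∀ t, (Finset.univ.filter fun j => u j t = x t).card ≤
      (Finset.univ.filter fun j => u j t = y t).card) :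
    ∑ j, fracAgree x (u j) ≤ ∑ j, fracAgree y (u j) := by
  rw [sum_fracAgree_eq, sum_fracAgree_eq]
  exact div_le_div_of_nonneg_right (Finset.sum_le_sum fun t _ => by exact_mod_cast h t)
    (Nat.cast_nonneg k)

end

/-- under coordinate-wise self-consistency, if some generation `u b` equals
the target `v`, then `b` maximizes the total pairwise fractional agreement. -/
theorem stmt2 {n k L : ℕ} (u : Fin n → Fin k → Fin L) (v : Fin k → Fin L)
    (hsc : ∀ t : Fin k, ∀ j : Fin L,
      (Finset.univ.filter (fun i => u i t = j)).card ≤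
        (Finset.univ.filter (fun i => u i t = v t)).card)
    (b : Fin n) (hb : u b = v) :
    ∀ i : Fin n,
      ∑ j ∈ Finset.univ.erase i, fracAgree (u i) (u j) ≤
        ∑ j ∈ Finset.univ.erase b, fracAgree (u b) (u j) := by
  intro i
  have htotal : ∑ j, fracAgree (u i) (u j) ≤ ∑ j, fracAgree (u b) (u j) :=
    sum_fracAgree_le_of_forall_card_le u fun t => hb ▸ hsc t (u i t)
  rw [Finset.sum_erase_eq_sub (Finset.mem_univ i), Finset.sum_erase_eq_sub (Finset.mem_univ b),
    fracAgree_self, fracAgree_self]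
  linarith
end

section
/- Suppose the self-consistency assumption holds coordinate-wise for u_1, ..., u_n ∈ Fin L^k with target v, and suppose in every coordinate t the plurality value v^t is attained by strictly more than n/2 of the generations (majority, not just plurality). Then the coordinate-wise majority vector m, defined by m^t = the value attained by more than half the u_i^t, equals v; and if some u_b = v, then u_b strictly maximizes Σ_{j≠i} a(u_i, u_j) over all i whose vector differs from v in at least one coordinate where the majority margin exceeds 1. -/
/-- Count of generations taking value `j` in coordinate `t`. -/
def cnt {n k L : ℕ} (u : Fin n → Fin k → Fin L) (t : Fin k) (j : Fin L) : ℕ :=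
  (Finset.univ.filter (fun i => u i t = j)).card

open Finset

section Majority

variable {n k L : ℕ} (u : Fin n → Fin k → Fin L)

lemma cnt_add_cnt_le (t : Fin k) {j j' : Fin L} (h : j ≠ j') : cnt u t j + cnt u t j' ≤ n := by
  unfold cnt
  rw [← card_union_of_disjoint (disjoint_filter.2 fun i _ hj hj' => h (hj.symm.trans hj'))]
  exact (card_le_univ _).trans_eq (Fintype.card_fin n)

lemma eq_of_lt_two_mul_cnt {t : Fin k} {j j' : Fin L} (hj : n < 2 * cnt u t j)
    (hj' : n < 2 * cnt u t j') : j = j' := by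
  by_contra h
  have := cnt_add_cnt_le u t h
  omega

lemma cnt_lt_of_lt_two_mul_cnt {t : Fin k} {j j' : Fin L} (hj : n < 2 * cnt u t j)
    (h : j' ≠ j) : cnt u t j' < cnt u t j := by
  have := cnt_add_cnt_le u t h
  omega

lemma cnt_le_of_lt_two_mul_cnt {t : Fin k} {j : Fin L} (hj : n < 2 * cnt u t j) (j' : Fin L) :
    cnt u t j' ≤ cnt u t j := by
  rcases eq_or_ne j' j with rfl | h
  · rfl
  · exact (cnt_lt_of_lt_two_mul_cnt u hj h).le

lemma sum_cnt_lt_of_ne_majority {v : Fin k → Fin L} (hv : ∀ t, n < 2 * cnt u t (v t))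
    {x : Fin k → Fin L} (hx : x ≠ v) : ∑ t, cnt u t (x t) < ∑ t, cnt u t (v t) := by
  obtain ⟨t₀, ht₀⟩ := Function.ne_iff.1 hx
  exact sum_lt_sum (fun t _ => cnt_le_of_lt_two_mul_cnt u (hv t) (x t))
    ⟨t₀, mem_univ _, cnt_lt_of_lt_two_mul_cnt u (hv t₀) ht₀⟩

lemma sum_erase_fracAgree (i : Fin n) :
    ∑ j ∈ univ.erase i, fracAgree (u i) (u j) = (∑ t, ((cnt u t (u i t) : ℝ) - 1)) / k := by
  simp only [fracAgree, ← sum_div]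
  rw [sum_comm]
  refine congrArg (· / _) (sum_congr rfl fun t _ => ?_)
  rw [sum_erase_eq_sub (mem_univ i), if_pos rfl, sum_boole]
  simp [cnt, eq_comm]

end Majority

/-- if in every coordinate `v t` is attained by strictly more than half of
the generations, then any coordinate-wise majority vector `m` equals `v`; and if some
`u b = v`, then `b` strictly dominates (in total agreement `T`) any generation differing
from `v` in some coordinate whose majority margin exceeds 1. -/
theorem stmt10 {n k L : ℕ} (u : Fin n → Fin k → Fin L) (v m : Fin k → Fin L)
    (hmajv : ∀ t : Fin k, n < 2 * cnt u t (v t))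
    (hmajm : ∀ t : Fin k, n < 2 * cnt u t (m t)) :
    m = v ∧
    (∀ b : Fin n, u b = v → ∀ i : Fin n,
      (∃ t : Fin k, u i t ≠ v t ∧
        ((Finset.univ.erase (v t)).sup (cnt u t)) + 1 < cnt u t (v t)) →
      ∑ j ∈ Finset.univ.erase i, fracAgree (u i) (u j) <
        ∑ j ∈ Finset.univ.erase b, fracAgree (u b) (u j)) := by
  refine ⟨funext fun t => eq_of_lt_two_mul_cnt u (hmajm t) (hmajv t), ?_⟩
  rintro b hb i ⟨t₀, hne, -⟩
  have hk : (0 : ℝ) < k := by exact_mod_cast t₀.pos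
  have hlt := sum_cnt_lt_of_ne_majority u hmajv (Function.ne_iff.2 ⟨t₀, hne⟩)
  rw [sum_erase_fracAgree, sum_erase_fracAgree, hb, div_lt_div_iff_of_pos_right hk,
    sum_sub_distrib, sum_sub_distrib]
  exact sub_lt_sub_right (by exact_mod_cast hlt) _
end
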